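/- Substitution theorem for formulas (Theorem 2): Let A and B be formulas, let C_A be a formula containing a designated occurrence of A, and let C_B be the result of replacing that occurrence of A in C_A by B. Then from the four R-expressions constituting A ⇔ˢ B taken as premises, each of the four R-expressions constituting C_A ⇔ˢ C_B is derivable in SC∞; i.e., A ⇔ˢ B ⊢ C_A ⇔ˢ C_B. -/

import Mathlib

/-- Formulas of the connexive logic C: propositional variables, strong
negation `∼`, conjunction, disjunction and implication. -/
inductive Formula : Type
  | var : Nat → Formula
  | snot : Formula → Formula
  | and : Formula → Formula → Formula
  | or : Formula → Formula → Formula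
  | imp : Formula → Formula → Formula
deriving DecidableEq

/-- R-expressions over the language of C.  `fm A` is the formula `A`,
`negFm A` is `−A`, `seq Δ S` is `(Δ ⇒ S)` and `negSeq Δ S` is `−(Δ ⇒ S)`.
The convention `−−S = S` is implemented by the involution `rneg`. -/
inductive RExpr : Type
  | fm : Formula → RExpr
  | negFm : Formula → RExpr
  | seq : List RExpr → RExpr → RExpr
  | negSeq : List RExpr → RExpr → RExpr

/-- The refutation `−S` of an R-expression, with `−−S = S`. -/
def rneg : RExpr → RExpr
  | .fm A => .negFm A
  | .negFm A => .fm A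
  | .seq Δ S => .negSeq Δ S
  | .negSeq Δ S => .seq Δ S

/-- Derivability in the higher-order sequent calculus `SC∞` from a set `P`
of R-expressions taken as additional premises. -/
inductive SC (P : Set RExpr) : RExpr → Prop
  | prem {S} : S ∈ P → SC P S
  | rf (S) : SC P (.seq [S] S)
  | wl {Δ S} (T) : SC P (.seq Δ S) → SC P (.seq (Δ ++ [T]) S)
  | pl {U} (Δ S T Γ) : SC P (.seq (Δ ++ S :: T :: Γ) U) → SC P (.seq (Δ ++ T :: S :: Γ) U)
  | cl {Δ S T} : SC P (.seq (Δ ++ [S, S]) T) → SC P (.seq (Δ ++ [S]) T)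
  | cut {Δ S T} : SC P (.seq Δ S) → SC P (.seq (Δ ++ [S]) T) → SC P (.seq Δ T)
  | riP {Γ Δ S} : SC P (.seq (Γ ++ Δ) S) → SC P (.seq Γ (.seq Δ S))
  | liP {Γ Δ S T} : (∀ U ∈ Δ, SC P (.seq Γ U)) → SC P (.seq (Γ ++ [S]) T) →
      SC P (.seq (Γ ++ [.seq Δ S]) T)
  | riN {Δ Γ S} : SC P (.seq (Δ ++ Γ) (rneg S)) → SC P (.seq Δ (rneg (.seq Γ S)))
  | riN' {Δ Γ S} : SC P (.seq Δ (rneg (.seq Γ S))) → SC P (.seq (Δ ++ Γ) (rneg S))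
  | liN {Δ Γ S T} : (∀ U ∈ Γ, SC P (.seq Δ U)) → SC P (.seq (Δ ++ [rneg S]) T) →
      SC P (.seq (Δ ++ [rneg (.seq Γ S)]) T)
  | snotL {Δ A S} : SC P (.seq (Δ ++ [.negFm A]) S) → SC P (.seq (Δ ++ [.fm (.snot A)]) S)
  | snotR {Δ A} : SC P (.seq Δ (.negFm A)) → SC P (.seq Δ (.fm (.snot A)))
  | snotLm {Δ A S} : SC P (.seq (Δ ++ [.fm A]) S) → SC P (.seq (Δ ++ [.negFm (.snot A)]) S)
  | snotRm {Δ A} : SC P (.seq Δ (.fm A)) → SC P (.seq Δ (.negFm (.snot A)))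
  | andL {Δ A B S} : SC P (.seq (Δ ++ [.fm A, .fm B]) S) → SC P (.seq (Δ ++ [.fm (.and A B)]) S)
  | andR {Δ A B} : SC P (.seq Δ (.fm A)) → SC P (.seq Δ (.fm B)) → SC P (.seq Δ (.fm (.and A B)))
  | andLm {Δ A B S} : SC P (.seq (Δ ++ [.negFm A]) S) → SC P (.seq (Δ ++ [.negFm B]) S) →
      SC P (.seq (Δ ++ [.negFm (.and A B)]) S)
  | andRm₁ {Δ A B} : SC P (.seq Δ (.negFm A)) → SC P (.seq Δ (.negFm (.and A B)))
  | andRm₂ {Δ A B} : SC P (.seq Δ (.negFm B)) → SC P (.seq Δ (.negFm (.and A B)))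
  | orL {Δ A B S} : SC P (.seq (Δ ++ [.fm A]) S) → SC P (.seq (Δ ++ [.fm B]) S) →
      SC P (.seq (Δ ++ [.fm (.or A B)]) S)
  | orR₁ {Δ A B} : SC P (.seq Δ (.fm A)) → SC P (.seq Δ (.fm (.or A B)))
  | orR₂ {Δ A B} : SC P (.seq Δ (.fm B)) → SC P (.seq Δ (.fm (.or A B)))
  | orLm {Δ A B S} : SC P (.seq (Δ ++ [.negFm A, .negFm B]) S) →
      SC P (.seq (Δ ++ [.negFm (.or A B)]) S)
  | orRm {Δ A B} : SC P (.seq Δ (.negFm A)) → SC P (.seq Δ (.negFm B)) →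
      SC P (.seq Δ (.negFm (.or A B)))
  | impL {Δ A B S} : SC P (.seq (Δ ++ [.seq [.fm A] (.fm B)]) S) →
      SC P (.seq (Δ ++ [.fm (.imp A B)]) S)
  | impR {Δ A B} : SC P (.seq Δ (.seq [.fm A] (.fm B))) → SC P (.seq Δ (.fm (.imp A B)))
  | impLm {Δ A B S} : SC P (.seq (Δ ++ [.negSeq [.fm A] (.fm B)]) S) →
      SC P (.seq (Δ ++ [.negFm (.imp A B)]) S)
  | impRm {Δ A B} : SC P (.seq Δ (.negSeq [.fm A] (.fm B))) → SC P (.seq Δ (.negFm (.imp A B)))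

/-- `S ⇔ˢ T` relative to the premise set `P`: the four R-expressions
`S ⇒ T`, `T ⇒ S`, `−S ⇒ −T`, `−T ⇒ −S` are each derivable from `P`. -/
def StrictEquiv (P : Set RExpr) (S T : RExpr) : Prop :=
  SC P (.seq [S] T) ∧ SC P (.seq [T] S) ∧
  SC P (.seq [rneg S] (rneg T)) ∧ SC P (.seq [rneg T] (rneg S))

/-- The four R-expressions constituting `S ⇔ˢ T`, taken as premises. -/
def equivPrems (S T : RExpr) : Set RExpr :=
  {RExpr.seq [S] T, RExpr.seq [T] S, RExpr.seq [rneg S] (rneg T), RExpr.seq [rneg T] (rneg S)}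
/-- `ReplF A B C D`: the formula `C` contains a designated occurrence of the
formula `A`, and `D` is the result of replacing that occurrence by `B`. -/
inductive ReplF (A B : Formula) : Formula → Formula → Prop
  | here : ReplF A B A B
  | snot {C D} : ReplF A B C D → ReplF A B (.snot C) (.snot D)
  | andLeft {C D} (E) : ReplF A B C D → ReplF A B (.and C E) (.and D E)
  | andRight {C D} (E) : ReplF A B C D → ReplF A B (.and E C) (.and E D)
  | orLeft {C D} (E) : ReplF A B C D → ReplF A B (.or C E) (.or D E)
  | orRight {C D} (E) : ReplF A B C D → ReplF A B (.or E C) (.or E D)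
  | impLeft {C D} (E) : ReplF A B C D → ReplF A B (.imp C E) (.imp D E)
  | impRight {C D} (E) : ReplF A B C D → ReplF A B (.imp E C) (.imp E D)

/-!
Split `C ⇔ˢ D` into the two "bilateral entailments" `C ⇒ D, −C ⇒ −D` and `D ⇒ C, −D ⇒ −C`
(unlike `⇒ˢ`, which pairs `C ⇒ D` with `−D ⇒ −C`). Every connective context preserves bilateral
entailment, except the antecedent of `→`, which turns `D ⇒ C` into it; so both halves are carried
through an induction on the position of the replaced occurrence.
-/

namespace SC

variable {P : Set RExpr}

lemma swap {S T U : RExpr} (h : SC P (.seq [S, T] U)) : SC P (.seq [T, S] U) :=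
  SC.pl [] S T [] h

lemma weaken_front {S U : RExpr} (T : RExpr) (h : SC P (.seq [S] U)) : SC P (.seq [T, S] U) :=
  (h.wl T).swap

end SC

def BilateralEntails (P : Set RExpr) (C D : Formula) : Prop :=
  SC P (.seq [.fm C] (.fm D)) ∧ SC P (.seq [.negFm C] (.negFm D))

theorem strictEquiv_fm_iff {P : Set RExpr} {C D : Formula} :
    StrictEquiv P (.fm C) (.fm D) ↔ BilateralEntails P C D ∧ BilateralEntails P D C :=
  ⟨fun ⟨hCD, hDC, hnCD, hnDC⟩ => ⟨⟨hCD, hnCD⟩, ⟨hDC, hnDC⟩⟩,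
    fun ⟨⟨hCD, hnCD⟩, ⟨hDC, hnDC⟩⟩ => ⟨hCD, hDC, hnCD, hnDC⟩⟩

theorem strictEquiv_equivPrems (S T : RExpr) : StrictEquiv (equivPrems S T) S T := by
  refine ⟨.prem ?_, .prem ?_, .prem ?_, .prem ?_⟩ <;> simp [equivPrems]

namespace BilateralEntails

variable {P : Set RExpr} {C D : Formula}

-- Strong negation swaps the two halves: `∼C` is verified by `−C` and falsified by `C`.
theorem snot (h : BilateralEntails P C D) : BilateralEntails P (.snot C) (.snot D) :=
  ⟨SC.snotL (Δ := []) (SC.snotR h.2), SC.snotLm (Δ := []) (SC.snotRm h.1)⟩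

theorem and_left (E : Formula) (h : BilateralEntails P C D) :
    BilateralEntails P (.and C E) (.and D E) :=
  ⟨SC.andL (Δ := []) (SC.andR (h.1.wl (.fm E)) ((SC.rf (.fm E)).weaken_front (.fm C))),
    SC.andLm (Δ := []) (SC.andRm₁ h.2) (SC.andRm₂ (SC.rf (.negFm E)))⟩

theorem and_right (E : Formula) (h : BilateralEntails P C D) :
    BilateralEntails P (.and E C) (.and E D) :=
  ⟨SC.andL (Δ := []) (SC.andR ((SC.rf (.fm E)).wl (.fm C)) (h.1.weaken_front (.fm E))),
    SC.andLm (Δ := []) (SC.andRm₁ (SC.rf (.negFm E))) (SC.andRm₂ h.2)⟩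

theorem or_left (E : Formula) (h : BilateralEntails P C D) :
    BilateralEntails P (.or C E) (.or D E) :=
  ⟨SC.orL (Δ := []) (SC.orR₁ h.1) (SC.orR₂ (SC.rf (.fm E))),
    SC.orLm (Δ := [])
      (SC.orRm (h.2.wl (.negFm E)) ((SC.rf (.negFm E)).weaken_front (.negFm C)))⟩

theorem or_right (E : Formula) (h : BilateralEntails P C D) :
    BilateralEntails P (.or E C) (.or E D) :=
  ⟨SC.orL (Δ := []) (SC.orR₁ (SC.rf (.fm E))) (SC.orR₂ h.1),
    SC.orLm (Δ := [])
      (SC.orRm ((SC.rf (.negFm E)).wl (.negFm C)) (h.2.weaken_front (.negFm E)))⟩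

theorem imp_right (E : Formula) (h : BilateralEntails P C D) :
    BilateralEntails P (.imp E C) (.imp E D) := by
  have hE : ∀ U ∈ [RExpr.fm E], SC P (.seq [.fm E] U) := by
    simpa using SC.rf (.fm E)
  constructor
  · refine SC.impL (Δ := []) (SC.impR (SC.riP (Γ := [_]) (Δ := [_]) (SC.swap ?_)))
    exact SC.liP (Γ := [.fm E]) hE (h.1.weaken_front (.fm E))
  · refine SC.impLm (Δ := []) (SC.impRm (SC.riN (Δ := [_]) (Γ := [_]) (S := .fm D) (SC.swap ?_)))
    exact SC.liN (Γ := [.fm E]) (S := .fm C) hE (h.2.weaken_front (.fm E))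

-- Connexive implication: `−(C → E)` is `C → −E`, so both halves are antitone in the antecedent
-- and need only `D ⇒ C`.
theorem imp_left (E : Formula) (h : SC P (.seq [.fm D] (.fm C))) :
    BilateralEntails P (.imp C E) (.imp D E) := by
  have hD : ∀ U ∈ [RExpr.fm C], SC P (.seq [.fm D] U) := by
    simpa using h
  constructor
  · refine SC.impL (Δ := []) (SC.impR (SC.riP (Γ := [_]) (Δ := [_]) (SC.swap ?_)))
    exact SC.liP (Γ := [.fm D]) hD ((SC.rf (.fm E)).weaken_front (.fm D))
  · refine SC.impLm (Δ := []) (SC.impRm (SC.riN (Δ := [_]) (Γ := [_]) (S := .fm E) (SC.swap ?_)))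
    exact SC.liN (Γ := [.fm C]) (S := .fm E) hD ((SC.rf (.negFm E)).weaken_front (.fm D))

end BilateralEntails

theorem ReplF.strictEquiv {P : Set RExpr} {A B C D : Formula}
    (hAB : StrictEquiv P (.fm A) (.fm B)) (h : ReplF A B C D) :
    StrictEquiv P (.fm C) (.fm D) := by
  rw [strictEquiv_fm_iff] at hAB ⊢
  induction h with
  | here => exact hAB
  | snot _ ih => exact ⟨ih.1.snot, ih.2.snot⟩
  | andLeft E _ ih => exact ⟨ih.1.and_left E, ih.2.and_left E⟩
  | andRight E _ ih => exact ⟨ih.1.and_right E, ih.2.and_right E⟩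
  | orLeft E _ ih => exact ⟨ih.1.or_left E, ih.2.or_left E⟩
  | orRight E _ ih => exact ⟨ih.1.or_right E, ih.2.or_right E⟩
  | impLeft E _ ih =>
      exact ⟨BilateralEntails.imp_left E ih.2.1, BilateralEntails.imp_left E ih.1.1⟩
  | impRight E _ ih => exact ⟨ih.1.imp_right E, ih.2.imp_right E⟩

/-- Theorem 2 (substitution theorem for formulas):
`A ⇔ˢ B ⊢ C_A ⇔ˢ C_B`. -/
theorem substitution_formulas (A B CA CB : Formula) (h : ReplF A B CA CB) :
    StrictEquiv (equivPrems (.fm A) (.fm B)) (.fm CA) (.fm CB) :=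
  h.strictEquiv (strictEquiv_equivPrems _ _)
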